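/- There is no finite simple graph G satisfying all of the following: G is triangle-free; G has exactly 22 edges; every vertex of G has degree at least 3 and at most 5; G has two distinct nonadjacent vertices a and b with deg(a) = deg(b) = 5; a and b have at most four common neighbors; no common neighbor of a and b has degree 3, and exactly three common neighbors of a and b have degree 4; every vertex adjacent to a but not to b has degree at least 4; and every vertex adjacent to b but not to a has degree at least 4. -/

import Mathlib

/-!
Let `A = N(a)`, `B = N(b)`, `S = A ∪ B` and `c = #(A ∩ B) ∈ {3, 4}`. Every vertex of `S` has
degree at least 4, and the `c - 3` common neighbours not of degree 4 have degree 5, so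
`∑_{v ∈ S} deg v ≥ 4 (10 - c) + (c - 3)`. On the other hand this sum counts each edge meeting `S`
once and each edge inside `S` twice, so it is at most `22 + e(S)`. Triangle-freeness makes the
common neighbours isolated in `S` and leaves only edges between `A \ B` and `B \ A`, so
`e(S) ≤ (5 - c)²`; for `c = 3, 4` the two bounds are incompatible.
-/

open Finset SimpleGraph

theorem Finset.mul_card_add_card_le_sum {α : Type*} [DecidableEq α] {s t : Finset α}
    {f : α → ℕ} {m : ℕ} (hts : t ⊆ s) (hs : ∀ x ∈ s, m ≤ f x) (ht : ∀ x ∈ t, m + 1 ≤ f x) :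
    #s * m + #t ≤ ∑ x ∈ s, f x := by
  have hsdiff : #(s \ t) * m ≤ ∑ x ∈ s \ t, f x := by
    simpa using card_nsmul_le_sum (s \ t) f m fun x hx => hs x (mem_sdiff.1 hx).1
  have hinter : #t * (m + 1) ≤ ∑ x ∈ t, f x := by
    simpa using card_nsmul_le_sum t f (m + 1) ht
  have hcard : #(s \ t) + #t = #s := card_sdiff_add_card_eq_card hts
  rw [← sum_sdiff hts, ← hcard]
  nlinarith

theorem Finset.mem_sdiff_or_mem_sdiff_or_mem_inter {α : Type*} [DecidableEq α]
    {s t : Finset α} {x : α} (h : x ∈ s ∪ t) : x ∈ s \ t ∨ x ∈ t \ s ∨ x ∈ s ∩ t := by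
  simp only [mem_union, mem_sdiff, mem_inter] at h ⊢
  tauto

namespace SimpleGraph

variable {V : Type*} {G : SimpleGraph V}

theorem CliqueFree.not_adj_of_adj_of_adj (h : G.CliqueFree 3) {a u w : V} (hu : G.Adj a u)
    (hw : G.Adj a w) : ¬ G.Adj u w := fun huw =>
  isIndepSet_neighborSet_of_triangleFree G h a hu hw huw.ne huw

variable [Fintype V] [DecidableEq V] [DecidableRel G.Adj]

theorem sum_degree_eq_sum_card_neighborFinset_inter (s : Finset V) :
    ∑ v ∈ s, G.degree v = ∑ u, #(G.neighborFinset u ∩ s) := by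
  have key := sum_card_bipartiteAbove_eq_sum_card_bipartiteBelow G.Adj (s := s) (t := univ)
  convert key using 2 with v _ u
  · rw [← card_neighborFinset_eq_degree, neighborFinset_eq_filter]
    rfl
  · congr 1
    ext w
    simp [bipartiteBelow, G.adj_comm, and_comm]

theorem two_mul_sum_degree_le (s : Finset V) :
    2 * ∑ v ∈ s, G.degree v ≤ 2 * #G.edgeFinset + ∑ u ∈ s, #(G.neighborFinset u ∩ s) := by
  have houtside : ∑ u ∈ sᶜ, #(G.neighborFinset u ∩ s) ≤ ∑ u ∈ sᶜ, G.degree u :=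
    sum_le_sum fun u _ => card_neighborFinset_eq_degree G u ▸ card_le_card inter_subset_left
  have hsplit := sum_add_sum_compl s fun u => #(G.neighborFinset u ∩ s)
  have hhandshake := sum_add_sum_compl s fun v => G.degree v
  rw [sum_degrees_eq_twice_card_edges] at hhandshake
  rw [← sum_degree_eq_sum_card_neighborFinset_inter] at hsplit
  omega

theorem CliqueFree.neighborFinset_inter_union_subset (h : G.CliqueFree 3) {a b u : V}
    (hu : u ∈ G.neighborFinset a \ G.neighborFinset b) :
    G.neighborFinset u ∩ (G.neighborFinset a ∪ G.neighborFinset b) ⊆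
      G.neighborFinset b \ G.neighborFinset a := by
  intro w hw
  simp only [mem_inter, mem_union, mem_sdiff, mem_neighborFinset] at hu hw ⊢
  have hwa : ¬ G.Adj a w := fun haw => h.not_adj_of_adj_of_adj hu.1 haw hw.1
  exact ⟨hw.2.resolve_left hwa, hwa⟩

theorem CliqueFree.neighborFinset_inter_union_eq_empty (h : G.CliqueFree 3) {a b u : V}
    (hu : u ∈ G.neighborFinset a ∩ G.neighborFinset b) :
    G.neighborFinset u ∩ (G.neighborFinset a ∪ G.neighborFinset b) = ∅ := by
  ext w
  simp only [mem_inter, mem_union, mem_neighborFinset, notMem_empty, iff_false] at hu ⊢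
  rintro ⟨huw, haw | hbw⟩
  · exact h.not_adj_of_adj_of_adj hu.1 haw huw
  · exact h.not_adj_of_adj_of_adj hu.2 hbw huw

theorem CliqueFree.sum_card_neighborFinset_inter_union_le (h : G.CliqueFree 3) (a b : V) :
    ∑ u ∈ G.neighborFinset a ∪ G.neighborFinset b,
        #(G.neighborFinset u ∩ (G.neighborFinset a ∪ G.neighborFinset b)) ≤
      2 * #(G.neighborFinset a \ G.neighborFinset b) *
        #(G.neighborFinset b \ G.neighborFinset a) := by
  set A := G.neighborFinset a
  set B := G.neighborFinset b
  set g := fun u => #(G.neighborFinset u ∩ (A ∪ B))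
  have hAB : ∑ u ∈ A \ B, g u ≤ #(A \ B) * #(B \ A) := by
    simpa using sum_le_card_nsmul (A \ B) g _ fun u hu =>
      card_le_card (h.neighborFinset_inter_union_subset hu)
  have hBA : ∑ u ∈ B \ A, g u ≤ #(B \ A) * #(A \ B) := by
    simpa [g, union_comm A] using sum_le_card_nsmul (B \ A) g _ fun u hu =>
      card_le_card (union_comm A B ▸ h.neighborFinset_inter_union_subset hu)
  have hC : ∑ u ∈ B ∩ A, g u = 0 := sum_eq_zero fun u hu => by
    rw [inter_comm] at hu
    exact card_eq_zero.2 (h.neighborFinset_inter_union_eq_empty hu)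
  have hunion := sum_inter_add_sum_sdiff (A ∪ B) B g
  have hB := sum_inter_add_sum_sdiff B A g
  rw [union_inter_cancel_right, union_sdiff_right] at hunion
  nlinarith

end SimpleGraph

theorem stmt_12_general {V : Type*} [Fintype V] [DecidableEq V] (G : SimpleGraph V)
    [DecidableRel G.Adj]
    (htf : G.CliqueFree 3)
    (hcard : G.edgeFinset.card = 22)
    (hmin : ∀ v : V, 3 ≤ G.degree v)
    (a b : V)
    (hda : G.degree a = 5) (hdb : G.degree b = 5)
    (hcn : (G.neighborFinset a ∩ G.neighborFinset b).card ≤ 4)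
    (hx : ((G.neighborFinset a ∩ G.neighborFinset b).filter (fun v => G.degree v = 3)).card = 0)
    (hy : ((G.neighborFinset a ∩ G.neighborFinset b).filter (fun v => G.degree v = 4)).card = 3)
    (hua : ∀ v ∈ (G.neighborFinset a) \ (G.neighborFinset b), 4 ≤ G.degree v)
    (hub : ∀ v ∈ (G.neighborFinset b) \ (G.neighborFinset a), 4 ≤ G.degree v) :
    False := by
  have hupper := G.two_mul_sum_degree_le (G.neighborFinset a ∪ G.neighborFinset b)
  have hinside := htf.sum_card_neighborFinset_inter_union_le a b
  have hunion := card_union_add_card_inter (G.neighborFinset a) (G.neighborFinset b)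
  have hsplit := card_filter_add_card_filter_not
    (s := G.neighborFinset a ∩ G.neighborFinset b) (G.degree · = 4)
  set A := G.neighborFinset a
  set B := G.neighborFinset b
  set C := A ∩ B
  have hA : #A = 5 := by rw [card_neighborFinset_eq_degree, hda]
  have hB : #B = 5 := by rw [card_neighborFinset_eq_degree, hdb]
  have hC3 : 3 ≤ #C := hy ▸ card_filter_le C _
  have hAB : #(A \ B) = 5 - #C := by rw [card_sdiff, inter_comm, hA]
  have hBA : #(B \ A) = 5 - #C := by rw [card_sdiff, hB]
  have hdegC : ∀ v ∈ C, 4 ≤ G.degree v := fun v hv =>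
    (hmin v).lt_of_ne' (filter_eq_empty_iff.1 (card_eq_zero.1 hx) hv)
  have hdeg : ∀ v ∈ A ∪ B, 4 ≤ G.degree v := fun v hv =>
    (mem_sdiff_or_mem_sdiff_or_mem_inter hv).elim (hua v) fun h => h.elim (hub v) (hdegC v)
  have hlower := mul_card_add_card_le_sum (t := C.filter (G.degree · ≠ 4))
    ((filter_subset _ C).trans inter_subset_union) hdeg fun v hv =>
      (hdegC v (mem_filter.1 hv).1).lt_of_ne' (mem_filter.1 hv).2
  rw [hAB, hBA] at hinside
  interval_cases #C <;> omega

theorem stmt_12 {V : Type*} [Fintype V] [DecidableEq V] (G : SimpleGraph V)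
    [DecidableRel G.Adj]
    (htf : G.CliqueFree 3)
    (hcard : G.edgeFinset.card = 22)
    (hmin : ∀ v : V, 3 ≤ G.degree v)
    (hmax : ∀ v : V, G.degree v ≤ 5)
    (a b : V) (hab : a ≠ b) (hnadj : ¬ G.Adj a b)
    (hda : G.degree a = 5) (hdb : G.degree b = 5)
    (hcn : (G.neighborFinset a ∩ G.neighborFinset b).card ≤ 4)
    (hx : ((G.neighborFinset a ∩ G.neighborFinset b).filter (fun v => G.degree v = 3)).card = 0)
    (hy : ((G.neighborFinset a ∩ G.neighborFinset b).filter (fun v => G.degree v = 4)).card = 3)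
    (hua : ∀ v ∈ (G.neighborFinset a) \ (G.neighborFinset b), 4 ≤ G.degree v)
    (hub : ∀ v ∈ (G.neighborFinset b) \ (G.neighborFinset a), 4 ≤ G.degree v) :
    False :=
  stmt_12_general G htf hcard hmin a b hda hdb hcn hx hy hua hub
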